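/- arXiv:2203.11200 — 3 statements merged into one kernel-verified Lean document; each statement's English description precedes it below -/
import Mathlib

section
/- Let N, m, K be positive integers, P an N×N real matrix, X an N×m real matrix, W^1, …, W^K m×m real matrices, and α^1, …, α^K ∈ ℝ^N node-wise coefficient vectors. Define H^0 = S^0 = X, H^l = P H^{l-1} W^l, and S^l = (1 − α^l) * S^{l-1} + α^l * H^l for 1 ≤ l ≤ K. With the convention that α^0 is the all-ones vector, define ϑ^l ∈ ℝ^N by ϑ^l_i = α^l_i ∏_{k=l+1}^{K} (1 − α^k_i), and let W̃^l = W^1 W^2 ⋯ W^l (with W̃^0 the identity). Then S^K = Σ_{l=0}^{K} ϑ^l * (P^l X W̃^l). -/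
/-- For `a ∈ ℝ^N` and an `N × d` matrix `M`, `rowScale a M` is the matrix whose
`i`-th row is `a i` times the `i`-th row of `M`. -/
def rowScale {N d : ℕ} (a : Fin N → ℝ) (M : Matrix (Fin N) (Fin d) ℝ) :
    Matrix (Fin N) (Fin d) ℝ :=
  Matrix.of fun i j => a i * M i j

lemma rowScale_eq_diag {N d : ℕ} (a : Fin N → ℝ) (M : Matrix (Fin N) (Fin d) ℝ) :
    rowScale a M = Matrix.diagonal a * M := by
  ext i j
  simp [rowScale, Matrix.diagonal_mul]

/-- Main identity in the proof of Theorem 1: the simplified (linear,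
normalization-free) `K`-layer CAGNN output is a `K`-order polynomial in the
propagation matrix `P` applied to the graph signal `X`, with per-node layer
coefficients `ϑ^l_i = α^l_i ∏_{k=l+1}^{K} (1 − α^k_i)` (convention `α^0 = 1`)
and cumulative weights `W̃^l = W^1 ⋯ W^l` (`W̃^0 = I`):
`S^K = Σ_{l=0}^{K} ϑ^l * (P^l X W̃^l)`. -/
theorem cagnn_linear_unrolling
    (N m K : ℕ) (hN : 0 < N) (hm : 0 < m) (hK : 0 < K)
    (P : Matrix (Fin N) (Fin N) ℝ) (X : Matrix (Fin N) (Fin m) ℝ)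
    (W : ℕ → Matrix (Fin m) (Fin m) ℝ)
    (α : ℕ → Fin N → ℝ)
    (hα0 : ∀ i, α 0 i = 1)
    (H S : ℕ → Matrix (Fin N) (Fin m) ℝ)
    (Wt : ℕ → Matrix (Fin m) (Fin m) ℝ)
    (hH0 : H 0 = X) (hS0 : S 0 = X)
    (hH : ∀ l, l < K → H (l + 1) = P * H l * W (l + 1))
    (hS : ∀ l, l < K →
      S (l + 1) = rowScale (fun i => 1 - α (l + 1) i) (S l)
                  + rowScale (α (l + 1)) (H (l + 1)))
    (hWt0 : Wt 0 = 1)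
    (hWt : ∀ l, l < K → Wt (l + 1) = Wt l * W (l + 1)) :
    S K = ∑ l ∈ Finset.range (K + 1),
      rowScale (fun i => α l i * ∏ k ∈ Finset.Icc (l + 1) K, (1 - α k i))
        (P ^ l * X * Wt l) := by
  have hHl : ∀ l, l ≤ K → H l = P ^ l * X * Wt l := by
    intro l
    induction l with
    | zero => intro _; simp [hH0, hWt0]
    | succ n ih =>
      intro hn1
      have hn : n < K := hn1
      rw [hH n hn, ih hn.le, hWt n hn, pow_succ']
      simp only [Matrix.mul_assoc]
  have key : ∀ n, n ≤ K → S n = ∑ l ∈ Finset.range (n + 1),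
      rowScale (fun i => α l i * ∏ k ∈ Finset.Icc (l + 1) n, (1 - α k i))
        (P ^ l * X * Wt l) := by
    intro n
    induction n with
    | zero =>
      intro _
      simp [hS0, hWt0, rowScale, hα0]
      rfl
    | succ n ih =>
      intro hn1
      have hn : n < K := hn1
      rw [hS n hn, ih hn.le, hHl (n + 1) hn1]
      simp only [rowScale_eq_diag]
      conv_lhs => rw [Matrix.mul_sum]
      conv_rhs => rw [Finset.sum_range_succ]
      congr 1
      · refine Finset.sum_congr rfl fun l hl => ?_
        have hl' : l + 1 ≤ n + 1 := Finset.mem_range.mp hl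
        have hf : (fun i => (1 - α (n + 1) i) *
              (α l i * ∏ k ∈ Finset.Icc (l + 1) n, (1 - α k i))) =
            fun i => α l i * ∏ k ∈ Finset.Icc (l + 1) (n + 1), (1 - α k i) := by
          funext i
          rw [Finset.prod_Icc_succ_top hl']
          ring
        rw [← Matrix.mul_assoc, Matrix.diagonal_mul_diagonal, hf]
      · have he : (fun i => α (n + 1) i *
            ∏ k ∈ Finset.Icc (n + 1 + 1) (n + 1), (1 - α k i)) = α (n + 1) := by
          funext i
          simp
        rw [he]
  exact key K le_rfl
end

section
/- Let N, m, K be positive integers, P an N×N real matrix, X an N×m real matrix, γ_0, γ_1, …, γ_K real scalars with γ_0 = 1, and α^1, …, α^K ∈ ℝ^N node-wise coefficient vectors. Define H^l = γ_l (P^l X) for 0 ≤ l ≤ K, S^0 = H^0 = X, and S^l = (1 − α^l) * S^{l-1} + α^l * H^l for 1 ≤ l ≤ K. With the convention that α^0 is the all-ones vector, define ϑ^l ∈ ℝ^N by ϑ^l_i = α^l_i ∏_{k=l+1}^{K} (1 − α^k_i), and θ^l = γ_l ϑ^l (entrywise scalar multiple). Then S^K = Σ_{l=0}^{K} θ^l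 * (P^l X). -/
/-- Conclusion of Theorem 1 for the weaker CAGNN with cumulative layer weights
fixed to scalars `γ_l` (with `γ_0 = 1`): setting `H^l = γ_l (P^l X)`,
`S^0 = H^0 = X`, `S^l = (1 − α^l) * S^{l-1} + α^l * H^l`, and
`ϑ^l_i = α^l_i ∏_{k=l+1}^{K} (1 − α^k_i)` (convention `α^0 = 1`),
`θ^l = γ_l ϑ^l`, we have `S^K = Σ_{l=0}^{K} θ^l * (P^l X)`. -/
theorem cagnn_scalar_weights_polynomial_filter
    (N m K : ℕ) (hN : 0 < N) (hm : 0 < m) (hK : 0 < K)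
    (P : Matrix (Fin N) (Fin N) ℝ) (X : Matrix (Fin N) (Fin m) ℝ)
    (γ : ℕ → ℝ) (hγ0 : γ 0 = 1)
    (α : ℕ → Fin N → ℝ)
    (hα0 : ∀ i, α 0 i = 1)
    (H S : ℕ → Matrix (Fin N) (Fin m) ℝ)
    (hH : ∀ l, l ≤ K → H l = γ l • (P ^ l * X))
    (hS0 : S 0 = H 0)
    (hS : ∀ l, l < K →
      S (l + 1) = rowScale (fun i => 1 - α (l + 1) i) (S l)
                  + rowScale (α (l + 1)) (H (l + 1))) :
    S K = ∑ l ∈ Finset.range (K + 1),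
      rowScale (fun i => γ l * (α l i * ∏ k ∈ Finset.Icc (l + 1) K, (1 - α k i)))
        (P ^ l * X) := by
  suffices h : ∀ n, n ≤ K → S n = ∑ l ∈ Finset.range (n + 1),
      rowScale (fun i => γ l * (α l i * ∏ k ∈ Finset.Icc (l + 1) n, (1 - α k i)))
        (P ^ l * X) from h K le_rfl
  intro n hn
  induction n with
  | zero =>
    rw [hS0, hH 0 (Nat.zero_le _)]
    ext i j
    simp [rowScale, hγ0, hα0, Finset.Icc_eq_empty_of_lt]
  | succ n ih =>
    rw [hS n (Nat.lt_of_succ_le hn), ih (Nat.le_of_succ_le hn), hH (n + 1) hn]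
    ext i j
    simp only [rowScale, Matrix.add_apply, Matrix.of_apply, Matrix.sum_apply,
      Matrix.smul_apply, smul_eq_mul]
    have key : ∀ l ∈ Finset.range (n + 1),
        γ l * (α l i * ∏ k ∈ Finset.Icc (l + 1) (n + 1), (1 - α k i)) * (P ^ l * X) i j
        = (1 - α (n + 1) i) *
          (γ l * (α l i * ∏ k ∈ Finset.Icc (l + 1) n, (1 - α k i)) * (P ^ l * X) i j) := by
      intro l hl
      have hl' : l < n + 1 := Finset.mem_range.mp hl
      rw [Finset.prod_Icc_succ_top (by omega : l + 1 ≤ n + 1)]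
      ring
    conv_rhs => rw [Finset.sum_range_succ]
    rw [Finset.sum_congr rfl key, ← Finset.mul_sum]
    have : Finset.Icc (n + 1 + 1) (n + 1) = ∅ := Finset.Icc_eq_empty_of_lt (by omega)
    rw [this, Finset.prod_empty]
    ring
end

section
/- Let N, m, K be positive integers, P an N×N real matrix, and X an N×m real matrix. Let t^0, …, t^K ∈ ℝ^N satisfy t^l_i ≥ 0 for all l, i and Σ_{l=0}^{K} t^l_i = 1 for every node i, and let γ_0, γ_1, …, γ_K be real scalars with γ_0 = 1. Then there exist node-wise coefficient vectors α^1, …, α^K with α^l_i ∈ [0,1] for all l, i such that, defining H^l = γ_l (P^l X), S^0 = X, and S^l = (1 − α^l) * S^{l-1} + α^l * H^l for 1 ≤ l ≤ K, one has S^K = Σ_{l=0}^{K} (γ_l t^l) * (P^l X). -/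
open Finset

theorem rowScale_row {N d : ℕ} (a : Fin N → ℝ) (M : Matrix (Fin N) (Fin d) ℝ) (i : Fin N) :
    rowScale a M i = a i • M i :=
  rfl

def cumulativeWeight (t : ℕ → ℝ) (l : ℕ) : ℝ :=
  ∑ j ∈ range (l + 1), t j

-- Junk value `0 / 0 = 0` when all weights up to `l` vanish.
noncomputable def stickBreakingRatio (t : ℕ → ℝ) (l : ℕ) : ℝ :=
  t l / cumulativeWeight t l

section StickBreaking

variable {t : ℕ → ℝ} {l : ℕ}

theorem cumulativeWeight_succ (t : ℕ → ℝ) (l : ℕ) :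
    cumulativeWeight t (l + 1) = cumulativeWeight t l + t (l + 1) :=
  sum_range_succ _ _

theorem le_cumulativeWeight (ht : ∀ j ≤ l, 0 ≤ t j) : t l ≤ cumulativeWeight t l :=
  single_le_sum (fun j hj => ht j (Nat.lt_succ_iff.mp (mem_range.mp hj)))
    (self_mem_range_succ l)

theorem stickBreakingRatio_mem_Icc (ht : ∀ j ≤ l, 0 ≤ t j) :
    stickBreakingRatio t l ∈ Set.Icc 0 1 := by
  have htl := ht l le_rfl
  have hle := le_cumulativeWeight ht
  refine ⟨div_nonneg htl (htl.trans hle), ?_⟩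
  rcases (htl.trans hle).eq_or_lt with hzero | hpos
  · simp [stickBreakingRatio, ← hzero]
  · exact div_le_one_of_le₀ hle hpos.le

theorem cumulativeWeight_mul_stickBreakingRatio (ht : ∀ j ≤ l, 0 ≤ t j) :
    cumulativeWeight t l * stickBreakingRatio t l = t l := by
  rcases eq_or_ne (cumulativeWeight t l) 0 with hzero | hne
  · have hle := le_cumulativeWeight ht
    rw [hzero, zero_mul]
    linarith [ht l le_rfl]
  · exact mul_div_cancel₀ _ hne

theorem cumulativeWeight_succ_mul_one_sub_stickBreakingRatio (ht : ∀ j ≤ l + 1, 0 ≤ t j) :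
    cumulativeWeight t (l + 1) * (1 - stickBreakingRatio t (l + 1)) = cumulativeWeight t l := by
  rw [mul_one_sub, cumulativeWeight_mul_stickBreakingRatio ht, cumulativeWeight_succ]
  ring

theorem cumulativeWeight_smul_eq_sum {E : Type*} [AddCommGroup E] [Module ℝ E]
    {h S : ℕ → E} (ht : ∀ j ≤ l, 0 ≤ t j) (hS0 : S 0 = h 0)
    (hrec : ∀ n < l, S (n + 1) =
      (1 - stickBreakingRatio t (n + 1)) • S n + stickBreakingRatio t (n + 1) • h (n + 1)) :
    cumulativeWeight t l • S l = ∑ j ∈ range (l + 1), t j • h j := by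
  induction l with
  | zero => simp [cumulativeWeight, hS0]
  | succ n ih =>
    have ht' : ∀ j ≤ n, 0 ≤ t j := fun j hj => ht j (Nat.le_succ_of_le hj)
    rw [hrec n (Nat.lt_succ_self n), smul_add, smul_smul, smul_smul,
      cumulativeWeight_succ_mul_one_sub_stickBreakingRatio ht,
      cumulativeWeight_mul_stickBreakingRatio ht,
      ih ht' fun k hk => hrec k (Nat.lt_succ_of_lt hk), sum_range_succ _ (n + 1)]

end StickBreaking

theorem cagnn_expresses_arbitrary_node_coefficients_general
    (N m K : ℕ)
    (P : Matrix (Fin N) (Fin N) ℝ) (X : Matrix (Fin N) (Fin m) ℝ)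
    (t : ℕ → Fin N → ℝ)
    (ht : ∀ l, l ≤ K → ∀ i, 0 ≤ t l i)
    (hsum : ∀ i, ∑ l ∈ Finset.range (K + 1), t l i = 1)
    (γ : ℕ → ℝ) (hγ0 : γ 0 = 1) :
    ∃ α : ℕ → Fin N → ℝ,
      (∀ l, 1 ≤ l → l ≤ K → ∀ i, α l i ∈ Set.Icc (0 : ℝ) 1) ∧
      ∀ H S : ℕ → Matrix (Fin N) (Fin m) ℝ,
        (∀ l, l ≤ K → H l = γ l • (P ^ l * X)) →
        S 0 = X →
        (∀ l, l < K →
          S (l + 1) = rowScale (fun i => 1 - α (l + 1) i) (S l)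
                      + rowScale (α (l + 1)) (H (l + 1))) →
        S K = ∑ l ∈ Finset.range (K + 1),
          rowScale (fun i => γ l * t l i) (P ^ l * X) := by
  refine ⟨fun l i => stickBreakingRatio (t · i) l,
    fun l _ hlK i => stickBreakingRatio_mem_Icc fun j hj => ht j (hj.trans hlK) i, ?_⟩
  intro H S hH hS0 hrec
  funext i
  have hrow := cumulativeWeight_smul_eq_sum (t := (t · i)) (h := fun l => γ l • (P ^ l * X) i)
    (S := fun l => S l i) (fun j hj => ht j hj i) (by simp [hS0, hγ0])
    fun n hn => by rw [hrec n hn, hH (n + 1) hn]; rfl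
  rw [show cumulativeWeight (t · i) K = 1 from hsum i, one_smul] at hrow
  rw [hrow]
  ext c
  simp only [Matrix.sum_apply, Finset.sum_apply]
  refine sum_congr rfl fun l _ => ?_
  rw [rowScale_row, smul_smul, mul_comm]

/-- Expressive power of the weaker `K`-layer CAGNN with cumulative layer
weights fixed to scalars `γ_l` (`γ_0 = 1`): for any per-node probability
weights `t^0, …, t^K` over the layers, there exist importance scores
`α^1, …, α^K` with entries in `[0,1]` such that, with `H^l = γ_l (P^l X)`,
`S^0 = X`, and `S^l = (1 − α^l) * S^{l-1} + α^l * H^l`, one has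
`S^K = Σ_{l=0}^{K} (γ_l t^l) * (P^l X)`. -/
theorem cagnn_expresses_arbitrary_node_coefficients
    (N m K : ℕ) (hN : 0 < N) (hm : 0 < m) (hK : 0 < K)
    (P : Matrix (Fin N) (Fin N) ℝ) (X : Matrix (Fin N) (Fin m) ℝ)
    (t : ℕ → Fin N → ℝ)
    (ht : ∀ l, l ≤ K → ∀ i, 0 ≤ t l i)
    (hsum : ∀ i, ∑ l ∈ Finset.range (K + 1), t l i = 1)
    (γ : ℕ → ℝ) (hγ0 : γ 0 = 1) :
    ∃ α : ℕ → Fin N → ℝ,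
      (∀ l, 1 ≤ l → l ≤ K → ∀ i, α l i ∈ Set.Icc (0 : ℝ) 1) ∧
      ∀ H S : ℕ → Matrix (Fin N) (Fin m) ℝ,
        (∀ l, l ≤ K → H l = γ l • (P ^ l * X)) →
        S 0 = X →
        (∀ l, l < K →
          S (l + 1) = rowScale (fun i => 1 - α (l + 1) i) (S l)
                      + rowScale (α (l + 1)) (H (l + 1))) →
        S K = ∑ l ∈ Finset.range (K + 1),
          rowScale (fun i => γ l * t l i) (P ^ l * X) :=
  cagnn_expresses_arbitrary_node_coefficients_general N m K P X t ht hsum γ hγ0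
end
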